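/- For every integer m ≥ 2, one has the identity S_{2m, m−1} = T(m), i.e. Σ_{k=m−1}^{2m−2} C(m+1, 2m−k) · C(2m+k, 2k) · C(4m, 2k)^{-1} · (2m−1−k)/2^{2m−k} = Σ_{r=2}^{m+1} C(2r, r) · C(m+1, r) · (r−1)/(2^r · C(4m, r)). -/

import Mathlib

/-- `T m = ∑_{r=2}^{m+1} C(2r, r) C(m+1, r) (r−1)/(2^r C(4m, r))`. -/
noncomputable def T (m : ℕ) : ℝ :=
  ∑ r ∈ Finset.Icc 2 (m + 1),
    (Nat.choose (2 * r) r : ℝ) * (Nat.choose (m + 1) r : ℝ) * ((r : ℝ) - 1) /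
      (2 ^ r * (Nat.choose (4 * m) r : ℝ))

/-- For `m ≥ 2`, `S_{2m, m−1} = T(m)`:
`∑_{k=m−1}^{2m−2} C(m+1, 2m−k) C(2m+k, 2k) C(4m, 2k)⁻¹ (2m−1−k)/2^{2m−k} = T(m)`. -/
theorem S_eq_T (m : ℕ) (hm : 2 ≤ m) :
    ∑ k ∈ Finset.Icc (m - 1) (2 * m - 2),
        (Nat.choose (m + 1) (2 * m - k) : ℝ) * (Nat.choose (2 * m + k) (2 * k) : ℝ) *
          ((Nat.choose (4 * m) (2 * k) : ℝ))⁻¹ *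
            ((2 * (m : ℝ) - 1 - k) / 2 ^ (2 * m - k)) = T m := by
  unfold T
  refine Finset.sum_nbij' (fun k => 2 * m - k) (fun r => 2 * m - r) ?_ ?_ ?_ ?_ ?_
  · intro k hk
    simp only [Finset.mem_Icc] at hk ⊢
    omega
  · intro r hr
    simp only [Finset.mem_Icc] at hr ⊢
    omega
  · intro k hk
    simp only [Finset.mem_Icc] at hk
    omega
  · intro r hr
    simp only [Finset.mem_Icc] at hr
    omega
  · intro k hk
    simp only [Finset.mem_Icc] at hk
    set r := 2 * m - k with hr
    have hk2m : k ≤ 2 * m := by omega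
    have hr2 : 2 ≤ r := by omega
    have hrm : r ≤ m + 1 := by omega
    have hkr : k = 2 * m - r := by omega
    have h2r : 2 * r ≤ 4 * m := by omega
    have hrle : r ≤ 4 * m := by omega
    -- rewrite nat index expressions
    have e1 : 2 * m + k = 4 * m - r := by omega
    have e2 : 2 * k = 4 * m - 2 * r := by omega
    have e3 : (k : ℝ) = 2 * m - r := by
      have h' : k + r = 2 * m := by omega
      have := congrArg (fun n : ℕ => (n : ℝ)) h'
      push_cast at this
      linarith
    have e4 : 2 * m - k = r := by omega
    rw [e1, e2]
    -- key binomial identity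
    have key : Nat.choose (4 * m) (2 * r) * Nat.choose (2 * r) r
        = Nat.choose (4 * m) r * Nat.choose (4 * m - r) r := by
      have h := Nat.choose_mul (n := 4 * m) (by omega : r ≤ 2 * r)
      rwa [show 2 * r - r = r by omega] at h
    have hsym : Nat.choose (4 * m) (4 * m - 2 * r) = Nat.choose (4 * m) (2 * r) :=
      Nat.choose_symm h2r
    have hsym2 : Nat.choose (4 * m - r) (4 * m - 2 * r) = Nat.choose (4 * m - r) r := by
      have h : 4 * m - 2 * r = (4 * m - r) - r := by omega
      rw [h]
      exact Nat.choose_symm (by omega)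
    have hpos1 : (0:ℝ) < Nat.choose (4 * m) (2 * r) := by
      exact_mod_cast Nat.choose_pos h2r
    have hpos2 : (0:ℝ) < Nat.choose (4 * m) r := by
      exact_mod_cast Nat.choose_pos hrle
    have keyC : ((4 * m).choose (2 * r) : ℝ) * ((2 * r).choose r : ℝ)
        = ((4 * m).choose r : ℝ) * ((4 * m - r).choose r : ℝ) := by exact_mod_cast key
    rw [hsym, hsym2, e3]
    have h5 : 2 * (m : ℝ) - 1 - (2 * (m:ℝ) - r) = (r : ℝ) - 1 := by ring
    rw [h5]
    have hpow : ((2:ℝ)^r) ≠ 0 := by positivity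
    field_simp
    linear_combination (-(((m+1).choose r : ℝ) * ((r:ℝ)-1))) * keyC
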